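/- arXiv:1610.03609 — 2 statements merged into one kernel-verified Lean document; each statement's English description precedes it below -/
import Mathlib

section
/- A pre-augmented tree (X, 𝓔) with 𝓔 = 𝓔_v ∪ 𝓔_h is Gromov hyperbolic if and only if there exists a constant L > 0 such that every horizontal geodesic in (X, 𝓔) has length at most L. -/
/-!
Levels in `augGraph T Eh` are the tree levels, and the pre-augmented condition says that the
parents of two horizontal neighbours coincide or are again horizontal neighbours, so a horizontal
walk can be pushed to any lower level without getting longer. Splitting a geodesic from `x` to
`y` at a vertex of minimal level `k` puts it in the normal form "from `x` to its ancestor at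
level `k`, along a horizontal geodesic of length `h`, then to `y`", so that `|x ∧ y| = k - h/2`.
If horizontal geodesics have length at most `L`, then for `x, y, z` both horizontal parts can be
pushed to the smaller of their levels `m`, giving `|x ∧ y| ≥ m - L ≥ min(|x ∧ z|, |z ∧ y|) - L`.
Conversely, the midpoint of a horizontal geodesic of length `n` at level `ℓ` has Gromov products
at least `ℓ - ⌈n/2⌉/2` with both ends, whose product is `ℓ - n/2`; hence `n ≤ 4δ + 1`.
-/

open Metric Filter

namespace HypIFS

/-- A rooted tree: a connected, locally finite simple graph with no cycles
and a distinguished root. -/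
structure RootedTree (X : Type*) where
  G : SimpleGraph X
  isTree : G.IsTree
  locFin : ∀ x : X, {y | G.Adj x y}.Finite
  root : X

variable {X : Type*}

/-- the level `|x|` of a vertex: graph distance from the root. -/
noncomputable def lvl (T : RootedTree X) (x : X) : ℕ := T.G.dist T.root x

/-- `p` is the parent `x⁻¹` of `x`. -/
def IsParent (T : RootedTree X) (p x : X) : Prop :=
  T.G.Adj p x ∧ lvl T p + 1 = lvl T x

/-- The graph `(X, 𝓔_v ∪ 𝓔_h)`. -/
def augGraph (T : RootedTree X) (Eh : X → X → Prop) : SimpleGraph X where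
  Adj x y := (T.G.Adj x y ∨ Eh x y ∨ Eh y x) ∧ x ≠ y
  symm := ⟨by
    rintro x y ⟨h1 | h2 | h3, hne⟩
    · exact ⟨Or.inl h1.symm, hne.symm⟩
    · exact ⟨Or.inr (Or.inr h2), hne.symm⟩
    · exact ⟨Or.inr (Or.inl h3), hne.symm⟩⟩
  loopless := ⟨fun x h => h.2 rfl⟩

/-- The Gromov product `|x ∧ y| = ½(|x| + |y| − d(x,y))` with respect to a root `o`. -/
noncomputable def gprod {V : Type*} (G : SimpleGraph V) (o x y : V) : ℝ :=
  ((G.dist o x : ℝ) + (G.dist o y : ℝ) - (G.dist x y : ℝ)) / 2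

/-- Gromov hyperbolicity of a graph with basepoint `o`. -/
def GromovHyperbolic {V : Type*} (G : SimpleGraph V) (o : V) : Prop :=
  ∃ δ : ℝ, 0 ≤ δ ∧ ∀ x y z : V,
    min (gprod G o x z) (gprod G o z y) - δ ≤ gprod G o x y

/-- `w 0, w 1, …, w n` is a horizontal geodesic of length `n` in the graph
`(X, 𝓔_v ∪ 𝓔_h)`: consecutive vertices joined by horizontal edges, all vertices
in one level, and the path has minimal length. -/
def IsHorizGeodesic (T : RootedTree X) (Eh : X → X → Prop) (n : ℕ) (w : ℕ → X) : Prop :=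
  (∀ i < n, Eh (w i) (w (i + 1)) ∧ w i ≠ w (i + 1)) ∧
  (∀ i ≤ n, lvl T (w i) = lvl T (w 0)) ∧
  (augGraph T Eh).dist (w 0) (w n) = n

open SimpleGraph

theorem dist_le_of_adj_succ {V : Type*} {G : SimpleGraph V} (hG : G.Connected) (f : ℕ → V)
    {i j : ℕ} (hij : i ≤ j) (hf : ∀ t, i ≤ t → t < j → G.Adj (f t) (f (t + 1))) :
    G.dist (f i) (f j) ≤ j - i := by
  induction j, hij using Nat.le_induction with
  | base => simp
  | succ j hij ih =>
    have hstep : G.dist (f j) (f (j + 1)) ≤ 1 := by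
      simpa using dist_le (hf j hij (by omega)).toWalk
    have := hG.dist_triangle (u := f i) (v := f j) (w := f (j + 1))
    have := ih fun t hit htj => hf t hit (by omega)
    omega

section RootedTree

variable {T : RootedTree X} {p q x y : X} {k m : ℕ}

theorem lvl_root (T : RootedTree X) : lvl T T.root = 0 := dist_self

theorem isParent_or_isParent_of_adj (h : T.G.Adj x y) : IsParent T x y ∨ IsParent T y x :=
  (T.isTree.dist_eq_dist_add_one_of_adj T.root h).elim
    (fun h' => Or.inr ⟨h.symm, h'.symm⟩) (fun h' => Or.inl ⟨h, h'.symm⟩)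

theorem exists_isParent (hx : lvl T x ≠ 0) : ∃ p, IsParent T p x := by
  obtain ⟨w, hw⟩ := T.isTree.connected.exists_walk_length_eq_dist x T.root
  have hnil : ¬ w.Nil := Walk.not_nil_of_ne fun h => hx (h ▸ lvl_root T)
  have hsnd : lvl T w.snd ≤ w.tail.length := by rw [lvl, dist_comm]; exact dist_le _
  have hlen := w.length_tail_add_one hnil
  have hx' : lvl T x = w.length := by rw [hw, lvl, dist_comm]
  rcases isParent_or_isParent_of_adj (w.adj_snd hnil) with h | h
  · have := h.2; omega
  · exact ⟨_, h⟩

theorem IsParent.eq_penultimate (hp : IsParent T p x) {Q : T.G.Walk T.root x}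
    (hQ : Q.length = lvl T x) : p = Q.penultimate := by
  classical
  obtain ⟨P, hP⟩ := T.isTree.connected.exists_walk_length_eq_dist T.root p
  have hxP : x ∉ P.support := fun hx => by
    have h₁ := P.length_takeUntil_le_length hx
    have h₂ : lvl T x ≤ (P.takeUntil x hx).length := dist_le _
    have := hp.2
    rw [hP] at h₁
    exact absurd h₁ (by unfold lvl at *; omega)
  have hQpath := Q.isPath_of_length_eq_dist hQ
  exact T.isTree.isAcyclic.eq_penultimate_of_adj_end hQpath hp.1.symm <|
    T.isTree.isAcyclic.mem_support_of_ne_mem_support_of_adj_of_isPath hQpath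
      (P.isPath_of_length_eq_dist hP) hp.1.symm hxP

theorem IsParent.eq (hp : IsParent T p x) (hq : IsParent T q x) : p = q := by
  obtain ⟨Q, hQ⟩ := T.isTree.connected.exists_walk_length_eq_dist T.root x
  exact (hp.eq_penultimate hQ).trans (hq.eq_penultimate hQ).symm

open Classical in
/-- The root is its own parent. -/
noncomputable def parent (T : RootedTree X) (x : X) : X :=
  if h : ∃ p, IsParent T p x then h.choose else x

theorem isParent_parent (hx : lvl T x ≠ 0) : IsParent T (parent T x) x := by
  have h := exists_isParent hx
  rw [parent, dif_pos h]
  exact h.choose_spec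

theorem parent_eq_self (hx : lvl T x = 0) : parent T x = x :=
  dif_neg fun ⟨_, _, h⟩ => by omega

theorem IsParent.parent_eq (h : IsParent T p x) : parent T x = p :=
  (isParent_parent (by have := h.2; omega)).eq h

theorem lvl_iterate_parent (n : ℕ) : lvl T ((parent T)^[n] x) = lvl T x - n := by
  induction n with
  | zero => rfl
  | succ n ih =>
    rw [Function.iterate_succ_apply', ← Nat.sub_sub, ← ih]
    by_cases h : lvl T ((parent T)^[n] x) = 0
    · rw [parent_eq_self h, h]
    · have := (isParent_parent h).2
      omega

/-- The ancestor of `x` at level `k`; it is `x` itself when `k ≥ |x|`. -/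
noncomputable def ancestor (T : RootedTree X) (k : ℕ) (x : X) : X := (parent T)^[lvl T x - k] x

theorem ancestor_ancestor (hkm : k ≤ m) (hm : m ≤ lvl T x) :
    ancestor T k (ancestor T m x) = ancestor T k x := by
  unfold ancestor
  rw [lvl_iterate_parent, ← Function.iterate_add_apply]
  congr 1
  omega

theorem IsParent.ancestor_eq (h : IsParent T p x) (hk : k ≤ lvl T p) :
    ancestor T k x = ancestor T k p := by
  have hx : lvl T x = lvl T p + 1 := h.2.symm
  have hp : ancestor T (lvl T p) x = p := by
    rw [ancestor, hx, Nat.add_sub_cancel_left, Function.iterate_one, h.parent_eq]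
  rw [← ancestor_ancestor hk (by omega : lvl T p ≤ lvl T x), hp]

end RootedTree

section Augmented

variable {T : RootedTree X} {Eh : X → X → Prop} {x y z : X} {k m : ℕ}

theorem augGraph_eq_sup (T : RootedTree X) (Eh : X → X → Prop) :
    augGraph T Eh = T.G ⊔ fromRel Eh := by
  ext x y
  simp only [augGraph, sup_adj, fromRel_adj]
  constructor
  · rintro ⟨h | h, hxy⟩
    exacts [Or.inl h, Or.inr ⟨hxy, h⟩]
  · rintro (h | ⟨hxy, h⟩)
    exacts [⟨Or.inl h, h.ne⟩, ⟨Or.inr h, hxy⟩]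

theorem G_le_augGraph : T.G ≤ augGraph T Eh := augGraph_eq_sup T Eh ▸ le_sup_left

theorem fromRel_le_augGraph : fromRel Eh ≤ augGraph T Eh := augGraph_eq_sup T Eh ▸ le_sup_right

theorem augGraph_connected (T : RootedTree X) (Eh : X → X → Prop) : (augGraph T Eh).Connected :=
  T.isTree.connected.mono G_le_augGraph

theorem isParent_or_isParent_or_adj_of_adj (h : (augGraph T Eh).Adj x y) :
    IsParent T x y ∨ IsParent T y x ∨ (fromRel Eh).Adj x y := by
  rw [augGraph_eq_sup, sup_adj] at h
  rcases h with h | h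
  · exact (isParent_or_isParent_of_adj h).elim Or.inl (Or.inr ∘ Or.inl)
  · exact Or.inr (Or.inr h)

theorem dist_le_length (T : RootedTree X) (q : (fromRel Eh).Walk x y) :
    (augGraph T Eh).dist x y ≤ q.length :=
  (dist_le (q.mapLe fromRel_le_augGraph)).trans_eq (Walk.length_mapLe _ _)

theorem dist_parent_le_one (T : RootedTree X) (Eh : X → X → Prop) (x : X) :
    (augGraph T Eh).dist x (parent T x) ≤ 1 := by
  by_cases hx : lvl T x = 0
  · simp [parent_eq_self hx]
  · simpa using dist_le (G_le_augGraph (isParent_parent hx).1.symm).toWalk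

theorem dist_ancestor_add_le (T : RootedTree X) (Eh : X → X → Prop) (hk : k ≤ lvl T x) :
    (augGraph T Eh).dist x (ancestor T k x) + k ≤ lvl T x := by
  suffices ∀ n, (augGraph T Eh).dist x ((parent T)^[n] x) ≤ n by
    have := this (lvl T x - k)
    unfold ancestor
    omega
  intro n
  induction n with
  | zero => simp
  | succ n ih =>
    rw [Function.iterate_succ_apply']
    have := (augGraph_connected T Eh).dist_triangle (u := x) (v := (parent T)^[n] x)
      (w := parent T ((parent T)^[n] x))
    have := dist_parent_le_one T Eh ((parent T)^[n] x)
    omega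

theorem dist_add_two_mul_le (T : RootedTree X) (Eh : X → X → Prop) (hx : k ≤ lvl T x)
    (hy : k ≤ lvl T y) :
    (augGraph T Eh).dist x y + 2 * k ≤
      lvl T x + lvl T y + (augGraph T Eh).dist (ancestor T k x) (ancestor T k y) := by
  have hconn := augGraph_connected T Eh
  have := hconn.dist_triangle (u := x) (v := ancestor T k x) (w := y)
  have := hconn.dist_triangle (u := ancestor T k x) (v := ancestor T k y) (w := y)
  have := dist_ancestor_add_le T Eh hx
  have := dist_ancestor_add_le T Eh hy
  rw [SimpleGraph.dist_comm] at this
  omega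

theorem lvl_eq_of_fromRel_adj (hlvl : ∀ x y, Eh x y → lvl T x = lvl T y)
    (h : (fromRel Eh).Adj x y) : lvl T x = lvl T y :=
  h.2.elim (hlvl x y) fun h => (hlvl y x h).symm

theorem lvl_eq_of_walk (hlvl : ∀ x y, Eh x y → lvl T x = lvl T y)
    (q : (fromRel Eh).Walk x y) : lvl T x = lvl T y := by
  induction q with
  | nil => rfl
  | cons h _ ih => exact (lvl_eq_of_fromRel_adj hlvl h).trans ih

theorem lvl_le_lvl_add_length (hlvl : ∀ x y, Eh x y → lvl T x = lvl T y)
    (p : (augGraph T Eh).Walk x y) : lvl T y ≤ lvl T x + p.length := by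
  induction p with
  | nil => simp
  | cons h _ ih =>
    rw [Walk.length_cons]
    rcases isParent_or_isParent_or_adj_of_adj h with h' | h' | h'
    · have := h'.2; omega
    · have := h'.2; omega
    · have := lvl_eq_of_fromRel_adj hlvl h'; omega

theorem dist_root_eq_lvl (hlvl : ∀ x y, Eh x y → lvl T x = lvl T y) (x : X) :
    (augGraph T Eh).dist T.root x = lvl T x := by
  refine le_antisymm ((T.isTree.connected T.root x).dist_anti G_le_augGraph) ?_
  obtain ⟨p, hp⟩ := (augGraph_connected T Eh).exists_walk_length_eq_dist T.root x
  have := lvl_le_lvl_add_length hlvl p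
  rw [lvl_root] at this
  omega

theorem gprod_eq (hlvl : ∀ x y, Eh x y → lvl T x = lvl T y) (x y : X) :
    gprod (augGraph T Eh) T.root x y =
      ((lvl T x : ℝ) + lvl T y - (augGraph T Eh).dist x y) / 2 := by
  rw [gprod, dist_root_eq_lvl hlvl, dist_root_eq_lvl hlvl]

theorem isHorizGeodesic_getVert (hsymm : ∀ x y, Eh x y → Eh y x)
    (hlvl : ∀ x y, Eh x y → lvl T x = lvl T y) (q : (fromRel Eh).Walk x y)
    (hq : (augGraph T Eh).dist x y = q.length) : IsHorizGeodesic T Eh q.length q.getVert := by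
  refine ⟨fun i hi => ?_, fun i _ => ?_, by rw [q.getVert_zero, q.getVert_length, hq]⟩
  · obtain ⟨hne, h⟩ := q.adj_getVert_succ hi
    exact ⟨h.elim id (hsymm _ _), hne⟩
  · rw [q.getVert_zero]
    exact (lvl_eq_of_walk hlvl (q.take i)).symm

theorem IsHorizGeodesic.le_four_mul_add_one (hlvl : ∀ x y, Eh x y → lvl T x = lvl T y) {δ : ℝ}
    (hδ : ∀ x y z, min (gprod (augGraph T Eh) T.root x z) (gprod (augGraph T Eh) T.root z y) -
      δ ≤ gprod (augGraph T Eh) T.root x y)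
    {n : ℕ} {w : ℕ → X} (hw : IsHorizGeodesic T Eh n w) : (n : ℝ) ≤ 4 * δ + 1 := by
  obtain ⟨hstep, hlev, hdist⟩ := hw
  have hadj : ∀ t < n, (augGraph T Eh).Adj (w t) (w (t + 1)) :=
    fun t ht => ⟨Or.inr (Or.inl (hstep t ht).1), (hstep t ht).2⟩
  have h₁ := dist_le_of_adj_succ (augGraph_connected T Eh) w (Nat.zero_le (n / 2))
    fun t _ htn => hadj t (by omega)
  have h₂ := dist_le_of_adj_succ (augGraph_connected T Eh) w (Nat.div_le_self n 2)
    fun t _ htn => hadj t htn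
  have key := hδ (w 0) (w n) (w (n / 2))
  rw [gprod_eq hlvl, gprod_eq hlvl, gprod_eq hlvl, hlev n le_rfl,
    hlev (n / 2) (Nat.div_le_self n 2), hdist] at key
  have hhalf : ((n / 2 : ℕ) : ℝ) * 2 ≤ n ∧ (n : ℝ) ≤ (n / 2 : ℕ) * 2 + 1 := by
    constructor <;> norm_cast <;> omega
  have h₁' : ((augGraph T Eh).dist (w 0) (w (n / 2)) : ℝ) ≤ (n / 2 : ℕ) := by exact_mod_cast h₁
  have h₂' : ((augGraph T Eh).dist (w (n / 2)) (w n) : ℝ) ≤ n - (n / 2 : ℕ) := by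
    rw [← Nat.cast_sub (Nat.div_le_self n 2)]
    exact_mod_cast h₂
  have hmin : (lvl T (w 0) : ℝ) - (n - (n / 2 : ℕ)) / 2 ≤ min
      (((lvl T (w 0) : ℝ) + lvl T (w 0) - (augGraph T Eh).dist (w 0) (w (n / 2))) / 2)
      (((lvl T (w 0) : ℝ) + lvl T (w 0) - (augGraph T Eh).dist (w (n / 2)) (w n)) / 2) :=
    le_min (by linarith) (by linarith)
  linarith

theorem parent_eq_or_adj
    (hpar : ∀ x y p q, Eh x y → IsParent T p x → IsParent T q y → p = q ∨ Eh p q)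
    (h : (fromRel Eh).Adj x y) (hxy : lvl T x = lvl T y) :
    parent T x = parent T y ∨ (fromRel Eh).Adj (parent T x) (parent T y) := by
  by_cases hx : lvl T x = 0
  · rw [parent_eq_self hx, parent_eq_self (hxy ▸ hx)]
    exact Or.inr h
  have hpx := isParent_parent hx
  have hpy := isParent_parent (hxy ▸ hx)
  by_cases he : parent T x = parent T y
  · exact Or.inl he
  refine Or.inr ⟨he, ?_⟩
  rcases h.2 with h | h
  · exact Or.inl ((hpar _ _ _ _ h hpx hpy).resolve_left he)
  · exact Or.inr ((hpar _ _ _ _ h hpy hpx).resolve_left (Ne.symm he))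

theorem ancestor_eq_or_adj (hlvl : ∀ x y, Eh x y → lvl T x = lvl T y)
    (hpar : ∀ x y p q, Eh x y → IsParent T p x → IsParent T q y → p = q ∨ Eh p q)
    (h : (fromRel Eh).Adj x y) (k : ℕ) :
    ancestor T k x = ancestor T k y ∨ (fromRel Eh).Adj (ancestor T k x) (ancestor T k y) := by
  have hxy := lvl_eq_of_fromRel_adj hlvl h
  unfold ancestor
  rw [hxy]
  induction lvl T y - k with
  | zero => exact Or.inr h
  | succ n ih =>
    simp only [Function.iterate_succ_apply']
    rcases ih with h' | h'
    · exact Or.inl (congrArg _ h')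
    · exact parent_eq_or_adj hpar h' (by rw [lvl_iterate_parent, lvl_iterate_parent, hxy])

theorem exists_walk_ancestor (hlvl : ∀ x y, Eh x y → lvl T x = lvl T y)
    (hpar : ∀ x y p q, Eh x y → IsParent T p x → IsParent T q y → p = q ∨ Eh p q)
    (q : (fromRel Eh).Walk x y) (k : ℕ) :
    ∃ q' : (fromRel Eh).Walk (ancestor T k x) (ancestor T k y), q'.length ≤ q.length := by
  induction q with
  | nil => exact ⟨Walk.nil, le_rfl⟩
  | cons h _ ih =>
    obtain ⟨q', hq'⟩ := ih
    rcases ancestor_eq_or_adj hlvl hpar h k with he | hadj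
    · exact ⟨q'.copy he.symm rfl, by simp only [Walk.length_copy, Walk.length_cons]; omega⟩
    · exact ⟨Walk.cons hadj q', by simp only [Walk.length_cons]; omega⟩

/-- Vertical steps of a walk staying at levels `≥ k` leave the ancestors at level `k` fixed,
and horizontal steps move them along at most one horizontal edge. -/
theorem exists_walk_ancestor_of_walk (hlvl : ∀ x y, Eh x y → lvl T x = lvl T y)
    (hpar : ∀ x y p q, Eh x y → IsParent T p x → IsParent T q y → p = q ∨ Eh p q)
    (p : (augGraph T Eh).Walk x y) (hp : ∀ z ∈ p.support, k ≤ lvl T z) :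
    ∃ q : (fromRel Eh).Walk (ancestor T k x) (ancestor T k y),
      q.length + lvl T x ≤ p.length + lvl T y := by
  induction p with
  | nil => exact ⟨Walk.nil, le_rfl⟩
  | @cons x x' y h p ih =>
    obtain ⟨q, hq⟩ := ih fun z hz => hp z (by simp [hz])
    have hx : k ≤ lvl T x := hp x (by simp)
    have hx' : k ≤ lvl T x' := hp x' (by simp)
    rw [Walk.length_cons]
    rcases isParent_or_isParent_or_adj_of_adj h with h' | h' | h'
    · exact ⟨q.copy (h'.ancestor_eq hx) rfl, by have := h'.2; rw [Walk.length_copy]; omega⟩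
    · exact ⟨q.copy (h'.ancestor_eq hx').symm rfl, by have := h'.2; rw [Walk.length_copy]; omega⟩
    · have := lvl_eq_of_fromRel_adj hlvl h'
      rcases ancestor_eq_or_adj hlvl hpar h' k with he | hadj
      · exact ⟨q.copy he.symm rfl, by rw [Walk.length_copy]; omega⟩
      · exact ⟨Walk.cons hadj q, by rw [Walk.length_cons]; omega⟩

theorem exists_normal_form (hlvl : ∀ x y, Eh x y → lvl T x = lvl T y)
    (hpar : ∀ x y p q, Eh x y → IsParent T p x → IsParent T q y → p = q ∨ Eh p q) (x y : X) :
    ∃ k ≤ lvl T x, k ≤ lvl T y ∧ ∃ q : (fromRel Eh).Walk (ancestor T k x) (ancestor T k y),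
      (augGraph T Eh).dist (ancestor T k x) (ancestor T k y) = q.length ∧
      (augGraph T Eh).dist x y + 2 * k = lvl T x + lvl T y + q.length := by
  classical
  obtain ⟨p, hp⟩ := (augGraph_connected T Eh).exists_walk_length_eq_dist x y
  obtain ⟨z, hz, hmin⟩ := Multiset.exists_min_image (lvl T) (s := (p.support : Multiset X))
    (by simp)
  simp only [Multiset.mem_coe] at hz hmin
  obtain ⟨q₁, hq₁⟩ := exists_walk_ancestor_of_walk hlvl hpar (p.takeUntil z hz)
    fun w hw => hmin w (p.support_takeUntil_subset_support hz hw)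
  obtain ⟨q₂, hq₂⟩ := exists_walk_ancestor_of_walk hlvl hpar (p.dropUntil z hz).reverse
    fun w hw => hmin w (p.support_dropUntil_subset_support hz (by simpa using hw))
  have hsplit := congrArg Walk.length (p.take_spec hz)
  rw [Walk.length_append] at hsplit
  rw [Walk.length_reverse] at hq₂
  have hx := hmin x p.start_mem_support
  have hy := hmin y p.end_mem_support
  have hq := dist_le_length T (q₁.append q₂.reverse)
  have := dist_add_two_mul_le T Eh hx hy
  rw [Walk.length_append, Walk.length_reverse] at hq
  refine ⟨lvl T z, hx, hy, q₁.append q₂.reverse, ?_, ?_⟩ <;>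
    simp only [Walk.length_append, Walk.length_reverse] <;> omega

theorem dist_add_two_mul_min_le (hlvl : ∀ x y, Eh x y → lvl T x = lvl T y)
    (hpar : ∀ x y p q, Eh x y → IsParent T p x → IsParent T q y → p = q ∨ Eh p q)
    (hkx : k ≤ lvl T x) (hkz : k ≤ lvl T z) (hmz : m ≤ lvl T z) (hmy : m ≤ lvl T y)
    (q₁ : (fromRel Eh).Walk (ancestor T k x) (ancestor T k z))
    (q₂ : (fromRel Eh).Walk (ancestor T m z) (ancestor T m y)) :
    (augGraph T Eh).dist x y + 2 * min k m ≤ lvl T x + lvl T y + q₁.length + q₂.length := by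
  obtain ⟨r₁, hr₁⟩ := exists_walk_ancestor hlvl hpar q₁ (min k m)
  obtain ⟨r₂, hr₂⟩ := exists_walk_ancestor hlvl hpar q₂ (min k m)
  have hr := dist_le_length T <|
    (r₁.copy (ancestor_ancestor (min_le_left _ _) hkx)
      (ancestor_ancestor (min_le_left _ _) hkz)).append
    (r₂.copy (ancestor_ancestor (min_le_right _ _) hmz)
      (ancestor_ancestor (min_le_right _ _) hmy))
  rw [Walk.length_append, Walk.length_copy, Walk.length_copy] at hr
  have := dist_add_two_mul_le T Eh (x := x) (y := y) (k := min k m) (by omega) (by omega)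
  omega

theorem gromovHyperbolic_of_isHorizGeodesic_le (hsymm : ∀ x y, Eh x y → Eh y x)
    (hlvl : ∀ x y, Eh x y → lvl T x = lvl T y)
    (hpar : ∀ x y p q, Eh x y → IsParent T p x → IsParent T q y → p = q ∨ Eh p q) {L : ℕ}
    (hL : ∀ (n : ℕ) (w : ℕ → X), IsHorizGeodesic T Eh n w → n ≤ L) :
    GromovHyperbolic (augGraph T Eh) T.root := by
  refine ⟨L, L.cast_nonneg, fun x y z => ?_⟩
  obtain ⟨k₁, hxk, hzk, q₁, hgeo₁, hd₁⟩ := exists_normal_form hlvl hpar x z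
  obtain ⟨k₂, hzk', hyk, q₂, hgeo₂, hd₂⟩ := exists_normal_form hlvl hpar z y
  have hL₁ := hL _ _ (isHorizGeodesic_getVert hsymm hlvl q₁ hgeo₁)
  have hL₂ := hL _ _ (isHorizGeodesic_getVert hsymm hlvl q₂ hgeo₂)
  have hd := dist_add_two_mul_min_le hlvl hpar hxk hzk hzk' hyk q₁ q₂
  have hxy : ((augGraph T Eh).dist x y : ℝ) + 2 * (min k₁ k₂ : ℕ) ≤ lvl T x + lvl T y + 2 * L := by
    exact_mod_cast (by omega : (augGraph T Eh).dist x y + 2 * min k₁ k₂ ≤ lvl T x + lvl T y + 2 * L)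
  have hxz : (lvl T x + lvl T z : ℝ) ≤ (augGraph T Eh).dist x z + 2 * k₁ := by
    exact_mod_cast (by omega : lvl T x + lvl T z ≤ (augGraph T Eh).dist x z + 2 * k₁)
  have hzy : (lvl T z + lvl T y : ℝ) ≤ (augGraph T Eh).dist z y + 2 * k₂ := by
    exact_mod_cast (by omega : lvl T z + lvl T y ≤ (augGraph T Eh).dist z y + 2 * k₂)
  rw [gprod_eq hlvl, gprod_eq hlvl, gprod_eq hlvl]
  have hmin : min (((lvl T x : ℝ) + lvl T z - (augGraph T Eh).dist x z) / 2)
      (((lvl T z : ℝ) + lvl T y - (augGraph T Eh).dist z y) / 2) ≤ (min k₁ k₂ : ℕ) := by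
    rw [Nat.cast_min]
    exact min_le_min (by linarith) (by linarith)
  linarith

end Augmented

theorem preaugmented_hyperbolic_iff_bounded_horizontal_geodesics_general
    (T : RootedTree X) (Eh : X → X → Prop)
    (hsymm : ∀ x y, Eh x y → Eh y x)
    (hlvl : ∀ x y, Eh x y → lvl T x = lvl T y)
    (hpar : ∀ x y p q, Eh x y → IsParent T p x → IsParent T q y → p = q ∨ Eh p q) :
    GromovHyperbolic (augGraph T Eh) T.root ↔
      ∃ L : ℕ, 0 < L ∧ ∀ (n : ℕ) (w : ℕ → X), IsHorizGeodesic T Eh n w → n ≤ L := by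
  refine ⟨fun ⟨δ, _, hδ⟩ => ⟨⌊4 * δ⌋₊ + 1, Nat.succ_pos _, fun n w hw => ?_⟩,
    fun ⟨L, _, hL⟩ => gromovHyperbolic_of_isHorizGeodesic_le hsymm hlvl hpar hL⟩
  have hn := hw.le_four_mul_add_one hlvl hδ
  have hfloor := Nat.lt_floor_add_one (4 * δ)
  have : (n : ℝ) < (⌊4 * δ⌋₊ + 1 : ℕ) + 1 := by push_cast; linarith
  exact Nat.lt_succ_iff.mp (by exact_mod_cast this)

/-- A pre-augmented tree is Gromov hyperbolic iff the lengths of its horizontal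
geodesics are uniformly bounded. -/
theorem preaugmented_hyperbolic_iff_bounded_horizontal_geodesics
    (T : RootedTree X) (Eh : X → X → Prop)
    (hsymm : ∀ x y, Eh x y → Eh y x)
    (hne : ∀ x y, Eh x y → x ≠ y)
    (hlvl : ∀ x y, Eh x y → lvl T x = lvl T y)
    (hpar : ∀ x y p q, Eh x y → IsParent T p x → IsParent T q y → p = q ∨ Eh p q) :
    GromovHyperbolic (augGraph T Eh) T.root ↔
      ∃ L : ℕ, 0 < L ∧ ∀ (n : ℕ) (w : ℕ → X), IsHorizGeodesic T Eh n w → n ≤ L :=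
  preaugmented_hyperbolic_iff_bounded_horizontal_geodesics_general T Eh hsymm hlvl hpar

end HypIFS
end

section
/- In an augmented tree induced by Φ satisfying (A1) and (A2): for every geodesic ray (x_n)_{n≥0}, the intersection ⋂_{n≥0} Φ(x_n) is a singleton; and if (x_n) and (y_n) are geodesic rays for which there is a constant c > 0 with graph distance d(x_n, y_n) ≤ c for all sufficiently large n, then ⋂_{n≥0} Φ(x_n) = ⋂_{n≥0} Φ(y_n). -/
open Metric Filter

namespace HypIFS

variable {X : Type*}

/-- The distance `dist(A, B)` between two subsets of a metric space. -/
noncomputable def setDist {E : Type*} [PseudoMetricSpace E] (A B : Set E) : ℝ :=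
  sInf (Set.image2 dist A B)

/-- The horizontal edge set `𝓔_h` induced by the set-valued map `Φ`:
`(x,y) ∈ 𝓔_h` iff `|x| = |y|`, `x ≠ y` and `dist(Φ(x), Φ(y)) ≤ κ r^{|x|}`. -/
def EhPhi {d : ℕ} (T : RootedTree X) (Φ : X → Set (EuclideanSpace ℝ (Fin d)))
    (r κ : ℝ) (x y : X) : Prop :=
  lvl T x = lvl T y ∧ x ≠ y ∧ setDist (Φ x) (Φ y) ≤ κ * r ^ lvl T x

/-- A geodesic ray: `x 0` is the root, `|x n| = n`, and consecutive vertices are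
joined by vertical (tree) edges. -/
def IsGeodesicRay (T : RootedTree X) (x : ℕ → X) : Prop :=
  x 0 = T.root ∧ ∀ n : ℕ, lvl T (x n) = n ∧ T.G.Adj (x n) (x (n + 1))

/-!
Along a geodesic ray the sets `Φ(xₙ)` are nested nonempty compacta of
diameter `≤ δ₀ rⁿ`, so their intersection is a point. An edge of the augmented tree
between levels `≥ m` joins sets whose points are `(2δ₀ + κ) rᵐ`-close, and a walk of
length `ℓ ≤ c` from `x_{m+c}` to `y_{m+c}` never drops below level `m`; hence the two
limit points are `(c + 1)(2δ₀ + κ) rᵐ`-close for every large `m`, so they coincide.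
-/

open Topology

theorem exists_iInter_eq_singleton_of_tendsto_diam {E : Type*} [MetricSpace E]
    {s : ℕ → Set E} (hs : Antitone s) (hne : ∀ n, (s n).Nonempty) (h0 : IsCompact (s 0))
    (hcl : ∀ n, IsClosed (s n)) (hdiam : Tendsto (fun n => diam (s n)) atTop (𝓝 0)) :
    ∃ a, ⋂ n, s n = {a} := by
  obtain ⟨a, ha⟩ := h0.nonempty_iInter_of_sequence_nonempty_isCompact_isClosed s
    (fun n => hs n.le_succ) hne hcl
  refine ⟨a, Set.eq_singleton_iff_unique_mem.2 ⟨ha, fun b hb => ?_⟩⟩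
  have hbounded : ∀ n, Bornology.IsBounded (s n) := fun n => h0.isBounded.subset (hs n.zero_le)
  refine dist_le_zero.1 (ge_of_tendsto' hdiam fun n => ?_)
  exact dist_le_diam_of_mem (hbounded n) (Set.mem_iInter.1 hb n) (Set.mem_iInter.1 ha n)

theorem exists_dist_eq_setDist {E : Type*} [MetricSpace E] {A B : Set E}
    (hA : IsCompact A) (hB : IsCompact B) (hAne : A.Nonempty) (hBne : B.Nonempty) :
    ∃ p ∈ A, ∃ q ∈ B, dist p q = setDist A B := by
  have hc : IsCompact (Set.image2 dist A B) := by
    rw [← Set.image_prod]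
    exact (hA.prod hB).image continuous_dist
  exact hc.sInf_mem (hAne.image2 hBne)

namespace RootedTree

variable {T : RootedTree X} {u v : X}

theorem isParent_or_isParent_of_adj (h : T.G.Adj u v) : IsParent T u v ∨ IsParent T v u := by
  rcases T.isTree.dist_eq_dist_add_one_of_adj T.root h with huv | huv
  · exact Or.inr ⟨h.symm, huv.symm⟩
  · exact Or.inl ⟨h, huv.symm⟩

theorem augGraph_connected (Eh : X → X → Prop) : (augGraph T Eh).Connected :=
  T.isTree.connected.mono fun _ _ huv => ⟨Or.inl huv, huv.ne⟩

end RootedTree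

theorem IsGeodesicRay.isParent {T : RootedTree X} {x : ℕ → X} (hx : IsGeodesicRay T x)
    (n : ℕ) : IsParent T (x n) (x (n + 1)) :=
  ⟨(hx.2 n).2, by rw [(hx.2 n).1, (hx.2 (n + 1)).1]⟩

section AugmentedTree

variable {d : ℕ} {T : RootedTree X} {Φ : X → Set (EuclideanSpace ℝ (Fin d))} {δ₀ r κ : ℝ}

theorem IsGeodesicRay.antitone (hA1 : ∀ p x, IsParent T p x → Φ x ⊆ Φ p) {x : ℕ → X}
    (hx : IsGeodesicRay T x) : Antitone fun n => Φ (x n) :=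
  antitone_nat_of_succ_le fun n => hA1 _ _ (hx.isParent n)

theorem lvl_le_lvl_add_one_of_adj {u v : X} (h : (augGraph T (EhPhi T Φ r κ)).Adj u v) :
    lvl T u ≤ lvl T v + 1 := by
  rcases h.1 with ht | he | he
  · rcases RootedTree.isParent_or_isParent_of_adj ht with huv | hvu
    · have := huv.2; omega
    · exact hvu.2.ge
  · exact he.1.le.trans (Nat.le_succ _)
  · exact he.1.ge.trans (Nat.le_succ _)

variable (hΦc : ∀ x, IsCompact (Φ x)) (hΦne : ∀ x, (Φ x).Nonempty)
  (hA1 : ∀ p x, IsParent T p x → Φ x ⊆ Φ p)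
  (hdiam : ∀ x, diam (Φ x) ≤ δ₀ * r ^ lvl T x)
include hΦc hdiam

theorem dist_le_of_mem_of_mem {x : X} {p q : EuclideanSpace ℝ (Fin d)} (hp : p ∈ Φ x)
    (hq : q ∈ Φ x) : dist p q ≤ δ₀ * r ^ lvl T x :=
  (dist_le_diam_of_mem (hΦc x).isBounded hp hq).trans (hdiam x)

include hA1 in
theorem dist_le_of_isParent {u v : X}
    (h : IsParent T u v) {p q : EuclideanSpace ℝ (Fin d)} (hp : p ∈ Φ u) (hq : q ∈ Φ v) :
    dist p q ≤ δ₀ * r ^ lvl T u :=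
  dist_le_of_mem_of_mem hΦc hdiam hp (hA1 u v h hq)

include hΦne in
theorem dist_le_of_ehPhi {u v : X} (h : EhPhi T Φ r κ u v) {p q : EuclideanSpace ℝ (Fin d)}
    (hp : p ∈ Φ u) (hq : q ∈ Φ v) : dist p q ≤ (2 * δ₀ + κ) * r ^ lvl T u := by
  obtain ⟨hlvl, -, hsetDist⟩ := h
  obtain ⟨p', hp', q', hq', hpq'⟩ := exists_dist_eq_setDist (hΦc u) (hΦc v) (hΦne u) (hΦne v)
  have hq'q := dist_le_of_mem_of_mem hΦc hdiam hq' hq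
  rw [← hlvl] at hq'q
  calc dist p q ≤ dist p p' + dist p' q' + dist q' q := dist_triangle4 p p' q' q
    _ ≤ δ₀ * r ^ lvl T u + κ * r ^ lvl T u + δ₀ * r ^ lvl T u := by
        gcongr
        · exact dist_le_of_mem_of_mem hΦc hdiam hp hp'
        · exact hpq' ▸ hsetDist
    _ = (2 * δ₀ + κ) * r ^ lvl T u := by ring

include hΦne hA1 in
theorem dist_le_of_adj (hδ₀ : 0 ≤ δ₀) (hκ : 0 ≤ κ) (hr : 0 ≤ r) {u v : X}
    (h : (augGraph T (EhPhi T Φ r κ)).Adj u v) {p q : EuclideanSpace ℝ (Fin d)}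
    (hp : p ∈ Φ u) (hq : q ∈ Φ v) :
    dist p q ≤ (2 * δ₀ + κ) * r ^ min (lvl T u) (lvl T v) := by
  have hδ₀C : δ₀ ≤ 2 * δ₀ + κ := by linarith
  rcases h.1 with ht | he | he
  · rcases RootedTree.isParent_or_isParent_of_adj ht with huv | hvu
    · rw [min_eq_left (huv.2 ▸ Nat.le_add_right _ _)]
      exact (dist_le_of_isParent hΦc hA1 hdiam huv hp hq).trans (by gcongr)
    · rw [min_eq_right (hvu.2 ▸ Nat.le_add_right _ _), dist_comm]
      exact (dist_le_of_isParent hΦc hA1 hdiam hvu hq hp).trans (by gcongr)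
  · rw [← he.1, min_self]
    exact dist_le_of_ehPhi hΦc hΦne hdiam he hp hq
  · rw [← he.1, min_self, dist_comm]
    exact dist_le_of_ehPhi hΦc hΦne hdiam he hq hp

include hΦne hA1 in
theorem dist_le_of_walk (hδ₀ : 0 ≤ δ₀) (hκ : 0 ≤ κ) (hr0 : 0 ≤ r) (hr1 : r ≤ 1) {u v : X}
    (w : (augGraph T (EhPhi T Φ r κ)).Walk u v) {m : ℕ} (hm : m + w.length ≤ lvl T u)
    {p q : EuclideanSpace ℝ (Fin d)} (hp : p ∈ Φ u) (hq : q ∈ Φ v) :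
    dist p q ≤ (w.length + 1) * ((2 * δ₀ + κ) * r ^ m) := by
  induction w generalizing p with
  | nil =>
    rw [SimpleGraph.Walk.length_nil, Nat.cast_zero, zero_add, one_mul]
    calc dist p q ≤ δ₀ * r ^ lvl T _ := dist_le_of_mem_of_mem hΦc hdiam hp hq
      _ ≤ (2 * δ₀ + κ) * r ^ m := by
          gcongr ?_ * ?_
          · linarith
          · exact pow_le_pow_of_le_one hr0 hr1 (by simpa using hm)
  | @cons u v' w h tail ih =>
    obtain ⟨z, hz⟩ := hΦne v'
    have hlen := SimpleGraph.Walk.length_cons h tail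
    have hlvl := lvl_le_lvl_add_one_of_adj h
    calc dist p q ≤ dist p z + dist z q := dist_triangle p z q
      _ ≤ (2 * δ₀ + κ) * r ^ m + (tail.length + 1) * ((2 * δ₀ + κ) * r ^ m) := by
          gcongr
          · exact (dist_le_of_adj hΦc hΦne hA1 hdiam hδ₀ hκ hr0 h hp hz).trans
              (mul_le_mul_of_nonneg_left (pow_le_pow_of_le_one hr0 hr1 (by omega)) (by linarith))
          · exact ih (by omega) hz hq
      _ = ((SimpleGraph.Walk.cons h tail).length + 1) * ((2 * δ₀ + κ) * r ^ m) := by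
          rw [hlen]; push_cast; ring

include hΦne hA1 in
theorem eq_of_mem_iInter_of_eventually_dist_le (hδ₀ : 0 ≤ δ₀) (hκ : 0 ≤ κ) (hr0 : 0 ≤ r)
    (hr1 : r < 1) {x y : ℕ → X} (hx : IsGeodesicRay T x) {c N : ℕ}
    (hxy : ∀ n ≥ N, (augGraph T (EhPhi T Φ r κ)).dist (x n) (y n) ≤ c)
    {a b : EuclideanSpace ℝ (Fin d)} (ha : a ∈ ⋂ n, Φ (x n)) (hb : b ∈ ⋂ n, Φ (y n)) :
    a = b := by
  have hbound : ∀ m ≥ N, dist a b ≤ (c + 1) * ((2 * δ₀ + κ) * r ^ m) := by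
    intro m hm
    obtain ⟨w, hw⟩ :=
      (RootedTree.augGraph_connected _ (x (m + c)) (y (m + c))).exists_walk_length_eq_dist
    have hwc : w.length ≤ c := hw ▸ hxy (m + c) (by omega)
    have hlvl : m + w.length ≤ lvl T (x (m + c)) := by rw [(hx.2 _).1]; omega
    calc dist a b ≤ (w.length + 1) * ((2 * δ₀ + κ) * r ^ m) :=
          dist_le_of_walk hΦc hΦne hA1 hdiam hδ₀ hκ hr0 hr1.le w hlvl
            (Set.mem_iInter.1 ha _) (Set.mem_iInter.1 hb _)
      _ ≤ (c + 1) * ((2 * δ₀ + κ) * r ^ m) := by gcongr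
  have hlim : Tendsto (fun m : ℕ => (c + 1) * ((2 * δ₀ + κ) * r ^ m)) atTop (𝓝 0) := by
    simpa using ((tendsto_pow_atTop_nhds_zero_of_lt_one hr0 hr1).const_mul
      (2 * δ₀ + κ)).const_mul ((c : ℝ) + 1)
  exact dist_le_zero.1 (ge_of_tendsto hlim (eventually_atTop.2 ⟨N, hbound⟩))

end AugmentedTree

/-- For every geodesic ray, `⋂ₙ Φ(xₙ)` is a singleton; and two geodesic rays
staying at uniformly bounded distance from each other determine the same
intersection. -/
theorem ray_intersection_singleton_and_welldefined {d : ℕ} (T : RootedTree X)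
    (Φ : X → Set (EuclideanSpace ℝ (Fin d))) (δ₀ r κ : ℝ)
    (hδ₀ : 1 < δ₀) (hr0 : 0 < r) (hr1 : r < 1) (hκ : 0 < κ)
    (hΦc : ∀ x, IsCompact (Φ x)) (hΦne : ∀ x, (Φ x).Nonempty)
    (hA1 : ∀ p x, IsParent T p x → Φ x ⊆ Φ p)
    (hA2 : ∀ x, δ₀⁻¹ * r ^ lvl T x ≤ diam (Φ x) ∧ diam (Φ x) ≤ δ₀ * r ^ lvl T x) :
    (∀ x : ℕ → X, IsGeodesicRay T x → ∃ a, (⋂ n : ℕ, Φ (x n)) = {a}) ∧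
    (∀ x y : ℕ → X, IsGeodesicRay T x → IsGeodesicRay T y →
      (∃ c : ℕ, 0 < c ∧ ∃ N : ℕ, ∀ n ≥ N,
        (augGraph T (EhPhi T Φ r κ)).dist (x n) (y n) ≤ c) →
      (⋂ n : ℕ, Φ (x n)) = ⋂ n : ℕ, Φ (y n)) := by
  have hdiam x := (hA2 x).2
  have hbound_lim : Tendsto (fun n : ℕ => δ₀ * r ^ n) atTop (𝓝 0) := by
    simpa using (tendsto_pow_atTop_nhds_zero_of_lt_one hr0.le hr1).const_mul δ₀
  have hsingleton (x : ℕ → X) (hx : IsGeodesicRay T x) : ∃ a, (⋂ n : ℕ, Φ (x n)) = {a} := by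
    refine exists_iInter_eq_singleton_of_tendsto_diam (hx.antitone hA1) (fun n => hΦne _)
      (hΦc _) (fun n => (hΦc _).isClosed) (squeeze_zero (fun n => diam_nonneg) (fun n => ?_)
        hbound_lim)
    simpa only [(hx.2 n).1] using hdiam (x n)
  refine ⟨hsingleton, ?_⟩
  rintro x y hx hy ⟨c, -, N, hxy⟩
  obtain ⟨a, ha⟩ := hsingleton x hx
  obtain ⟨b, hb⟩ := hsingleton y hy
  have hab : a = b := eq_of_mem_iInter_of_eventually_dist_le hΦc hΦne hA1 hdiam
    (by linarith) hκ.le hr0.le hr1 hx hxy (ha ▸ rfl) (hb ▸ rfl)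
  rw [ha, hb, hab]

end HypIFS
end
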